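/- Let n ≥ 4, let d and a(1), ..., a(n−1) be integers with 0 < a(i) < d for every i and Σ_{i=1}^{n−1} a(i) < d, let a = (a(1), ..., a(n−1), d)^T ∈ ℤ^n, and let K be the convex hull in ℝ^n of {0, e_1, ..., e_{n−1}, a}. Let C = ⋃_{i≥1} (iK ∩ ℤ^n) be the union over all positive integers i of the lattice points of iK. Then the all-ones vector 𝟏 ∈ C cannot be written as 𝟏 = y + z with y, z ∈ C both nonzero; i.e., 𝟏 is an atom of the additive monoid generated, and in particular 𝟏 ∉ ((n−2)K ∩ ℤ^n) + (K ∩ ℤ^n). -/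

import Mathlib

/-!
With `d = a l` the height of the apex and `A = ∑_{i ≠ l} a i`, every dilate `m • K` of
`K = conv {0, e_i (i ≠ l), a}` satisfies `x l ≥ 0`, `d * x i ≥ a i * x l` and
`d * ∑_{i ≠ l} x i - (A - 1) * x l ≤ m * d`, the last being the facet through all vertices but `0`.
If a lattice point of a dilate has `x l = 1`, the second family forces `x i ≥ 1` everywhere; so in
a splitting `𝟏 = y + z` into lattice points of dilates one summand takes all of `𝟏` and the other
is `0`. Evaluating the facet inequality at `𝟏` gives `m ≥ (n - 1) - (A - 1) / d > n - 2`, so `𝟏`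
lies neither in `K` nor in `(n - 2) • K`, whereas `𝟏 = a / d + ∑_{i ≠ l} (1 - a i / d) • e_i`
has total weight at most `n - 1`, so `𝟏 ∈ (n - 1) • K`.
-/

open Pointwise

/-- The set of lattice points (points with integer coordinates) of `ℝ^n`. -/
def latticePoints (n : ℕ) : Set (Fin n → ℝ) := {x | ∀ i, ∃ z : ℤ, x i = (z : ℝ)}

section Convex

variable {E : Type*} [AddCommGroup E] [Module ℝ E]

theorem le_mul_of_mem_smul_convexHull {S : Set E} (f : E →ₗ[ℝ] ℝ) {r : ℝ}
    (hS : ∀ s ∈ S, f s ≤ r) {m : ℝ} (hm : 0 ≤ m) {x : E} (hx : x ∈ m • convexHull ℝ S) :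
    f x ≤ m * r := by
  obtain ⟨k, hk, rfl⟩ := hx
  rw [map_smul, smul_eq_mul]
  exact mul_le_mul_of_nonneg_left (convexHull_min hS (convex_halfSpace_le f.isLinear r) hk) hm

theorem Convex.sum_smul_mem_sum_smul {K : Set E} (hK : Convex ℝ K) (h0 : (0 : E) ∈ K)
    {ι : Type*} {t : Finset ι} {c : ι → ℝ} {v : ι → E} (hc : ∀ i ∈ t, 0 ≤ c i)
    (hv : ∀ i ∈ t, v i ∈ K) : ∑ i ∈ t, c i • v i ∈ (∑ i ∈ t, c i) • K := by
  classical
  induction t using Finset.induction_on with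
  | empty => simpa using Set.zero_mem_smul_set h0
  | insert i t hi ih =>
    simp only [Finset.forall_mem_insert] at hc hv
    rw [Finset.sum_insert hi, Finset.sum_insert hi, hK.add_smul hc.1 (Finset.sum_nonneg hc.2)]
    exact Set.add_mem_add (Set.smul_mem_smul_set hv.1) (ih hc.2 hv.2)

theorem Convex.smul_subset_smul_of_zero_mem {K : Set E} (hK : Convex ℝ K) (h0 : (0 : E) ∈ K)
    {p q : ℝ} (hp : 0 < p) (hpq : p ≤ q) : p • K ⊆ q • K :=
  calc p • K ⊆ p • ((q / p) • K) :=
        Set.smul_set_mono fun _ hk => hK.mem_smul_of_zero_mem h0 hk ((one_le_div hp).2 hpq)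
    _ = q • K := by rw [smul_smul, mul_div_cancel₀ _ hp.ne']

end Convex

section ApexSimplex

variable {ι : Type*} [DecidableEq ι] {l : ι} {a : ι → ℝ}

def apexSimplexVertices (l : ι) (a : ι → ℝ) : Set (ι → ℝ) :=
  {0} ∪ {x | ∃ i, i ≠ l ∧ x = Pi.single i 1} ∪ {a}

theorem forall_mem_apexSimplexVertices {P : (ι → ℝ) → Prop} :
    (∀ s ∈ apexSimplexVertices l a, P s) ↔ P 0 ∧ (∀ i, i ≠ l → P (Pi.single i 1)) ∧ P a := by
  simp only [apexSimplexVertices, Set.mem_union, Set.mem_singleton_iff, Set.mem_ofPred_eq, or_imp,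
    forall_and, forall_eq, forall_exists_index, and_imp]
  grind

def apexSimplex (l : ι) (a : ι → ℝ) : Set (ι → ℝ) := convexHull ℝ (apexSimplexVertices l a)

theorem convex_apexSimplex : Convex ℝ (apexSimplex l a) := convex_convexHull ℝ _

theorem zero_mem_apexSimplex : (0 : ι → ℝ) ∈ apexSimplex l a :=
  subset_convexHull ℝ _ (.inl (.inl rfl))

theorem single_mem_apexSimplex {i : ι} (hi : i ≠ l) : Pi.single i 1 ∈ apexSimplex l a :=
  subset_convexHull ℝ _ (.inl (.inr ⟨i, hi, rfl⟩))

theorem apex_mem_apexSimplex : a ∈ apexSimplex l a :=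
  subset_convexHull ℝ _ (.inr rfl)

variable {m : ℝ} {x : ι → ℝ}

theorem mul_apply_le_mul_apply_of_mem_smul_apexSimplex (hl : 0 ≤ a l) (hm : 0 ≤ m)
    (hx : x ∈ m • apexSimplex l a) (i : ι) : a i * x l ≤ a l * x i := by
  have := le_mul_of_mem_smul_convexHull (a i • LinearMap.proj l - a l • LinearMap.proj i)
    (r := 0) ?_ hm hx
  · simpa [sub_nonpos] using this
  refine forall_mem_apexSimplexVertices.2 ⟨?_, fun j hj => ?_, ?_⟩
  · simp
  · simp only [LinearMap.sub_apply, LinearMap.smul_apply, LinearMap.coe_proj, Function.eval,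
      Pi.single_eq_of_ne hj.symm, smul_eq_mul, mul_zero, Pi.single_apply, mul_ite, mul_one,
      zero_sub, Left.neg_nonpos_iff]
    exact ite_nonneg hl le_rfl
  · simp [mul_comm]

theorem nonneg_of_mem_smul_apexSimplex (hl : 0 < a l) (ha : ∀ i ≠ l, 0 ≤ a i) (hm : 0 ≤ m)
    (hx : x ∈ m • apexSimplex l a) (i : ι) : 0 ≤ x i := by
  have hxl : 0 ≤ x l := by
    have := le_mul_of_mem_smul_convexHull (-LinearMap.proj l) (r := 0) ?_ hm hx
    · simpa using this
    refine forall_mem_apexSimplexVertices.2 ⟨?_, fun j _ => ?_, ?_⟩ <;> simp [*, hl.le]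
  obtain rfl | hi := eq_or_ne i l
  · exact hxl
  · exact (mul_nonneg_iff_of_pos_left hl).1 <|
      (mul_nonneg (ha i hi) hxl).trans (mul_apply_le_mul_apply_of_mem_smul_apexSimplex hl.le hm hx i)

theorem one_le_of_mem_smul_apexSimplex (hl : 0 < a l) (ha : ∀ i ≠ l, 0 < a i) (hm : 0 ≤ m)
    (hx : x ∈ m • apexSimplex l a) (hxℤ : ∀ i, ∃ k : ℤ, x i = k) (hxl : x l = 1) (i : ι) :
    1 ≤ x i := by
  obtain rfl | hi := eq_or_ne i l
  · exact hxl.ge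
  have hpos : 0 < x i := by
    have := mul_apply_le_mul_apply_of_mem_smul_apexSimplex hl.le hm hx i
    rw [hxl, mul_one] at this
    exact pos_of_mul_pos_right ((ha i hi).trans_le this) hl.le
  obtain ⟨k, hk⟩ := hxℤ i
  rw [hk] at hpos ⊢
  exact_mod_cast (Int.cast_pos.1 hpos : 0 < k)

theorem eq_zero_of_add_eq_one_of_apply_eq_one (hl : 0 < a l) (ha : ∀ i ≠ l, 0 < a i)
    {p q : ℝ} (hp : 0 ≤ p) (hq : 0 ≤ q) {y z : ι → ℝ} (hy : y ∈ p • apexSimplex l a)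
    (hz : z ∈ q • apexSimplex l a) (hyℤ : ∀ i, ∃ k : ℤ, y i = k) (hyl : y l = 1)
    (hyz : y + z = 1) : z = 0 := by
  funext i
  have h1 := one_le_of_mem_smul_apexSimplex hl ha hp hy hyℤ hyl i
  have h0 := nonneg_of_mem_smul_apexSimplex hl (fun j hj => (ha j hj).le) hq hz i
  have hsum : y i + z i = 1 := congrFun hyz i
  simp only [Pi.zero_apply]
  linarith

theorem eq_zero_or_eq_zero_of_add_eq_one (hl : 0 < a l) (ha : ∀ i ≠ l, 0 < a i)
    {p q : ℝ} (hp : 0 ≤ p) (hq : 0 ≤ q) {y z : ι → ℝ} (hy : y ∈ p • apexSimplex l a)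
    (hz : z ∈ q • apexSimplex l a) (hyℤ : ∀ i, ∃ k : ℤ, y i = k) (hzℤ : ∀ i, ∃ k : ℤ, z i = k)
    (hyz : y + z = 1) : y = 0 ∨ z = 0 := by
  have hsum : y l + z l = 1 := congrFun hyz l
  have hy0 := nonneg_of_mem_smul_apexSimplex hl (fun j hj => (ha j hj).le) hp hy l
  have hz0 := nonneg_of_mem_smul_apexSimplex hl (fun j hj => (ha j hj).le) hq hz l
  obtain ⟨k, hk⟩ := hyℤ l
  have hk01 : k = 0 ∨ k = 1 := by
    have h0 : (0 : ℝ) ≤ k := hk ▸ hy0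
    have h1 : (k : ℝ) ≤ 1 := by linarith
    have : 0 ≤ k ∧ k ≤ 1 := ⟨by exact_mod_cast h0, by exact_mod_cast h1⟩
    omega
  rcases hk01 with rfl | rfl
  · left
    refine eq_zero_of_add_eq_one_of_apply_eq_one hl ha hq hp hz hy hzℤ ?_ (add_comm z y ▸ hyz)
    rw [hk, Int.cast_zero, zero_add] at hsum
    exact hsum
  · right
    exact eq_zero_of_add_eq_one_of_apply_eq_one hl ha hp hq hy hz hyℤ (by rw [hk, Int.cast_one]) hyz

variable [Fintype ι]

theorem mul_sum_sub_le_of_mem_smul_apexSimplex (hl : 0 ≤ a l) (hm : 0 ≤ m)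
    (hx : x ∈ m • apexSimplex l a) :
    a l * ∑ i ∈ Finset.univ.erase l, x i - (∑ i ∈ Finset.univ.erase l, a i - 1) * x l ≤
      m * a l := by
  have := le_mul_of_mem_smul_convexHull
    (a l • ∑ i ∈ Finset.univ.erase l, LinearMap.proj i -
      (∑ i ∈ Finset.univ.erase l, a i - 1) • LinearMap.proj l) (r := a l) ?_ hm hx
  · simpa using this
  refine forall_mem_apexSimplexVertices.2 ⟨?_, fun j hj => ?_, ?_⟩
  · simp [hl]
  · simp [Pi.single_apply, hj.symm]
  · simp only [LinearMap.sub_apply, LinearMap.smul_apply, LinearMap.coe_sum, LinearMap.coe_proj,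
      Finset.sum_apply, Function.eval, smul_eq_mul]
    linarith

theorem one_mem_smul_apexSimplex (hl : 0 < a l) (hle : ∀ i ≠ l, a i ≤ a l)
    (hsum : 1 ≤ ∑ i ∈ Finset.univ.erase l, a i) :
    (1 : ι → ℝ) ∈ ((Fintype.card ι : ℝ) - 1) • apexSimplex l a := by
  set c : ι → ℝ := fun i => 1 - a i / a l
  have hc : ∀ i ∈ Finset.univ.erase l, 0 ≤ c i := fun i hi =>
    sub_nonneg.2 ((div_le_one hl).2 (hle i (Finset.ne_of_mem_erase hi)))
  have hdecomp : (1 : ι → ℝ) = (a l)⁻¹ • a + ∑ i ∈ Finset.univ.erase l, c i • Pi.single i 1 := by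
    ext j
    obtain rfl | hj := eq_or_ne j l
    · simp [hl.ne', Finset.sum_apply, Pi.single_apply, -Finset.sum_erase_eq_sub]
    · simp only [Pi.one_apply, Pi.add_apply, Pi.smul_apply, smul_eq_mul, Finset.sum_apply,
        Pi.single_apply, mul_ite, mul_one, mul_zero, Finset.sum_ite_eq, Finset.mem_erase, hj,
        Ne, not_false_eq_true, Finset.mem_univ, and_self, if_true, c]
      field_simp
      ring
  have hweight : (a l)⁻¹ + ∑ i ∈ Finset.univ.erase l, c i ≤ (Fintype.card ι : ℝ) - 1 := by
    have hinv : (a l)⁻¹ ≤ (∑ i ∈ Finset.univ.erase l, a i) / a l := by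
      rw [inv_eq_one_div]
      exact div_le_div_of_nonneg_right hsum hl.le
    simp only [c, Finset.sum_sub_distrib, ← Finset.sum_div, Finset.sum_const, nsmul_one,
      Finset.cast_card_erase_of_mem (Finset.mem_univ l), Finset.card_univ]
    linarith
  refine convex_apexSimplex.smul_subset_smul_of_zero_mem zero_mem_apexSimplex
    (add_pos_of_pos_of_nonneg (inv_pos.2 hl) (Finset.sum_nonneg hc)) hweight ?_
  rw [hdecomp, convex_apexSimplex.add_smul (inv_pos.2 hl).le (Finset.sum_nonneg hc)]
  exact Set.add_mem_add (Set.smul_mem_smul_set apex_mem_apexSimplex)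
    (convex_apexSimplex.sum_smul_mem_sum_smul zero_mem_apexSimplex hc
      fun i hi => single_mem_apexSimplex (Finset.ne_of_mem_erase hi))

theorem one_notMem_smul_apexSimplex (hl : 0 < a l) (hsum : ∑ i ∈ Finset.univ.erase l, a i ≤ a l)
    (hm0 : 0 ≤ m) (hm : m ≤ Fintype.card ι - 2) : (1 : ι → ℝ) ∉ m • apexSimplex l a := by
  intro h1
  have hfacet := mul_sum_sub_le_of_mem_smul_apexSimplex hl.le hm0 h1
  simp only [Pi.one_apply, Finset.sum_const, nsmul_eq_mul, mul_one,
    Finset.cast_card_erase_of_mem (Finset.mem_univ l), Finset.card_univ] at hfacet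
  nlinarith [mul_le_mul_of_nonneg_right hm hl.le]

theorem add_ne_one_of_mem_smul_apexSimplex (hl : 0 < a l) (ha : ∀ i ≠ l, 0 < a i)
    (hsum : ∑ i ∈ Finset.univ.erase l, a i ≤ a l) {p q : ℝ} (hp0 : 0 ≤ p)
    (hp : p ≤ Fintype.card ι - 2) (hq0 : 0 ≤ q) (hq : q ≤ Fintype.card ι - 2) {y z : ι → ℝ}
    (hy : y ∈ p • apexSimplex l a) (hz : z ∈ q • apexSimplex l a)
    (hyℤ : ∀ i, ∃ k : ℤ, y i = k) (hzℤ : ∀ i, ∃ k : ℤ, z i = k) : y + z ≠ 1 := by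
  intro hyz
  rcases eq_zero_or_eq_zero_of_add_eq_one hl ha hp0 hq0 hy hz hyℤ hzℤ hyz with rfl | rfl
  · rw [zero_add] at hyz
    exact one_notMem_smul_apexSimplex hl hsum hq0 hq (hyz ▸ hz)
  · rw [add_zero] at hyz
    exact one_notMem_smul_apexSimplex hl hsum hp0 hp (hyz ▸ hy)

end ApexSimplex

/-- With `K` the convex hull of `{0, e_1, …, e_{n-1}, a}` as in Example 4 (`n ≥ 4`,
`0 < a i < d` for `i < n-1`, `∑_{i<n-1} a i < d`, last coordinate of `a` equal to `d`),
let `C = ⋃_{i ≥ 1} (iK ∩ ℤ^n)`.  Then the all-ones vector `𝟏` belongs to `C`, it cannot be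
written as `y + z` with `y, z ∈ C` both nonzero (it is an atom), and in particular
`𝟏 ∉ ((n-2)K ∩ ℤ^n) + (K ∩ ℤ^n)`. -/
theorem example4_atom (n : ℕ) (hn : 4 ≤ n) (d : ℤ) (a : Fin n → ℤ)
    (ha : ∀ i : Fin n, (i : ℕ) < n - 1 → 0 < a i ∧ a i < d)
    (hlast : a ⟨n - 1, by omega⟩ = d)
    (hsum : ∑ i ∈ Finset.univ.filter (fun i : Fin n => (i : ℕ) < n - 1), a i < d)
    (S : Set (Fin n → ℝ))
    (hS : S = {0} ∪ {x | ∃ i : Fin n, (i : ℕ) < n - 1 ∧ x = Pi.single i 1} ∪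
      {fun i => (a i : ℝ)})
    (K : Set (Fin n → ℝ)) (hK : K = convexHull ℝ S)
    (C : Set (Fin n → ℝ))
    (hC : C = ⋃ (i : ℕ) (_ : 1 ≤ i), ((i : ℝ) • K ∩ latticePoints n)) :
    (fun _ => (1 : ℝ)) ∈ C ∧
    (∀ y z : Fin n → ℝ, y ∈ C → z ∈ C → y + z = (fun _ => (1 : ℝ)) →
      y = 0 ∨ z = 0) ∧
    (fun _ => (1 : ℝ)) ∉
      (((n - 2 : ℕ) : ℝ) • K ∩ latticePoints n) + (K ∩ latticePoints n) := by
  set l : Fin n := ⟨n - 1, by omega⟩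
  set b : Fin n → ℝ := fun i => (a i : ℝ)
  have hlt (i : Fin n) : (i : ℕ) < n - 1 ↔ i ≠ l := by
    simp only [l, Ne, Fin.ext_iff]
    omega
  have hK : K = apexSimplex l b := by
    rw [hK, hS, apexSimplex, apexSimplexVertices]
    simp only [hlt]
  have hpos (i : Fin n) (hi : i ≠ l) : 0 < b i := Int.cast_pos.2 (ha i ((hlt i).2 hi)).1
  have hle (i : Fin n) (hi : i ≠ l) : b i ≤ b l :=
    Int.cast_le.2 (hlast ▸ (ha i ((hlt i).2 hi)).2.le)
  have h0 : (⟨0, by omega⟩ : Fin n) ≠ l := (hlt _).1 (by simp only; omega)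
  have hl : 0 < b l := (hpos _ h0).trans_le (hle _ h0)
  have hsum_le : ∑ i ∈ Finset.univ.erase l, b i ≤ b l := by
    rw [← Finset.filter_ne']
    simp only [b, ← hlt, hlast]
    exact_mod_cast hsum.le
  have hsum_pos : 0 < ∑ i ∈ Finset.univ.erase l, a i :=
    Finset.sum_pos (fun i hi => (ha i ((hlt i).2 (Finset.ne_of_mem_erase hi))).1)
      ⟨_, Finset.mem_erase.2 ⟨h0, Finset.mem_univ _⟩⟩
  have hmemC (y : Fin n → ℝ) :
      y ∈ C ↔ ∃ p : ℕ, 1 ≤ p ∧ y ∈ (p : ℝ) • K ∧ y ∈ latticePoints n := by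
    simp only [hC, Set.mem_iUnion, Set.mem_inter_iff, exists_prop]
  refine ⟨(hmemC _).2 ⟨n - 1, by omega, ?_, fun _ => ⟨1, by simp⟩⟩, ?_, ?_⟩
  · have := one_mem_smul_apexSimplex hl hle (by simp only [b]; exact_mod_cast hsum_pos)
    rwa [Fintype.card_fin, ← Nat.cast_one, ← Nat.cast_sub (by omega), ← hK] at this
  · intro y z hy hz hyz
    obtain ⟨p, -, hyK, hyℤ⟩ := (hmemC y).1 hy
    obtain ⟨q, -, hzK, hzℤ⟩ := (hmemC z).1 hz
    rw [hK] at hyK hzK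
    exact eq_zero_or_eq_zero_of_add_eq_one hl hpos p.cast_nonneg q.cast_nonneg hyK hzK hyℤ hzℤ hyz
  · rintro ⟨y, ⟨hyK, hyℤ⟩, z, ⟨hzK, hzℤ⟩, hyz⟩
    rw [hK] at hyK hzK
    have hcard : (Fintype.card (Fin n) : ℝ) - 2 = ((n - 2 : ℕ) : ℝ) := by
      rw [Fintype.card_fin, Nat.cast_sub (by omega : 2 ≤ n), Nat.cast_two]
    refine add_ne_one_of_mem_smul_apexSimplex hl hpos hsum_le (Nat.cast_nonneg _) hcard.ge
      zero_le_one ?_ hyK (by rwa [one_smul]) hyℤ hzℤ hyz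
    rw [hcard]
    exact_mod_cast (by omega : 1 ≤ n - 2)
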